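/- arXiv:cs/0605052 — 7 statements merged into one kernel-verified Lean document; each statement's English description precedes it below -/
import Mathlib

section
/- Let C : (0, ∞) → ℝ be twice differentiable, nondecreasing, and satisfy x·C''(x) + C'(x) ≤ 0 for every x > 0. Let m ≥ 1, let g₁, …, g_m > 0 and N > 0 be real constants. Then the function (s₀, s₁, …, s_m) ↦ C( exp(s₀) / ( Σ_{k=1}^m g_k·exp(s_k) + N ) ) is concave on ℝ^{m+1}. -/
open Real Finset

/-- Weighted AM-GM applied termwise: Hölder-type bound for weighted sums of exponentials. -/
lemma lse_key (m : ℕ) (g : Fin m → ℝ) (hg : ∀ k, 0 < g k) (N : ℝ) (hN : 0 < N)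
    (x y : Fin m → ℝ) (a b : ℝ) (ha : 0 ≤ a) (hb : 0 ≤ b) (hab : a + b = 1) :
    ∑ k, g k * Real.exp (a * x k + b * y k) + N ≤
      (∑ k, g k * Real.exp (x k) + N) ^ a * (∑ k, g k * Real.exp (y k) + N) ^ b := by
  set X := ∑ k, g k * Real.exp (x k) + N with hXdef
  set Y := ∑ k, g k * Real.exp (y k) + N with hYdef
  have hXpos : 0 < X := by
    have : 0 ≤ ∑ k, g k * Real.exp (x k) :=
      Finset.sum_nonneg fun k _ => mul_nonneg (hg k).le (Real.exp_pos _).le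
    linarith
  have hYpos : 0 < Y := by
    have : 0 ≤ ∑ k, g k * Real.exp (y k) :=
      Finset.sum_nonneg fun k _ => mul_nonneg (hg k).le (Real.exp_pos _).le
    linarith
  set P := X ^ a * Y ^ b with hPdef
  have hPpos : 0 < P := by positivity
  -- termwise bound
  have hterm : ∀ u v : ℝ, 0 < u → 0 < v →
      u ^ a * v ^ b ≤ (P * (a / X)) * u + (P * (b / Y)) * v := by
    intro u v hu hv
    have h1 : (u / X) ^ a * (v / Y) ^ b ≤ a * (u / X) + b * (v / Y) :=
      Real.geom_mean_le_arith_mean2_weighted ha hb (by positivity) (by positivity) hab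
    have h2 : (u / X) ^ a * (v / Y) ^ b = u ^ a * v ^ b / P := by
      rw [Real.div_rpow hu.le hXpos.le, Real.div_rpow hv.le hYpos.le, hPdef]
      ring
    rw [h2, div_le_iff₀ hPpos] at h1
    calc u ^ a * v ^ b ≤ (a * (u / X) + b * (v / Y)) * P := h1
      _ = (P * (a / X)) * u + (P * (b / Y)) * v := by ring
  -- rewrite each summand as a product of rpows
  have hrw : ∀ (c p q : ℝ), 0 < c →
      c * Real.exp (a * p + b * q) = (c * Real.exp p) ^ a * (c * Real.exp q) ^ b := by
    intro c p q hc
    have hc2 : c ^ a * c ^ b = c := by rw [← Real.rpow_add hc, hab, Real.rpow_one]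
    have he : Real.exp p ^ a * Real.exp q ^ b = Real.exp (a * p + b * q) := by
      rw [← Real.exp_mul, ← Real.exp_mul, ← Real.exp_add]
      ring_nf
    rw [Real.mul_rpow hc.le (Real.exp_pos p).le, Real.mul_rpow hc.le (Real.exp_pos q).le]
    calc c * Real.exp (a * p + b * q)
        = (c ^ a * c ^ b) * (Real.exp p ^ a * Real.exp q ^ b) := by rw [hc2, he]
      _ = c ^ a * Real.exp p ^ a * (c ^ b * Real.exp q ^ b) := by ring
  have hNrw : N = N ^ a * N ^ b := by
    rw [← Real.rpow_add hN, hab, Real.rpow_one]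
  calc ∑ k, g k * Real.exp (a * x k + b * y k) + N
      = ∑ k, (g k * Real.exp (x k)) ^ a * (g k * Real.exp (y k)) ^ b + N ^ a * N ^ b := by
        rw [← hNrw]
        congr 1
        exact Finset.sum_congr rfl fun k _ => hrw (g k) (x k) (y k) (hg k)
    _ ≤ ∑ k, ((P * (a / X)) * (g k * Real.exp (x k)) + (P * (b / Y)) * (g k * Real.exp (y k)))
          + ((P * (a / X)) * N + (P * (b / Y)) * N) := by
        exact add_le_add (Finset.sum_le_sum fun k _ =>
          hterm _ _ (mul_pos (hg k) (Real.exp_pos _)) (mul_pos (hg k) (Real.exp_pos _)))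
          (hterm _ _ hN hN)
    _ = (P * (a / X)) * X + (P * (b / Y)) * Y := by
        rw [Finset.sum_add_distrib, ← Finset.mul_sum, ← Finset.mul_sum, hXdef, hYdef]
        ring
    _ = P := by
        have h1 : a / X * X = a := div_mul_cancel₀ a hXpos.ne'
        have h2 : b / Y * Y = b := div_mul_cancel₀ b hYpos.ne'
        calc P * (a / X) * X + P * (b / Y) * Y = P * (a / X * X) + P * (b / Y * Y) := by ring
          _ = P * (a + b) := by rw [h1, h2, mul_add]
          _ = P := by rw [hab, mul_one]

/-- Composition of a monotone concave function with a concave function is concave. -/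
lemma concave_comp_mono {E : Type*} [AddCommMonoid E] [Module ℝ E]
    {f : E → ℝ} {D : ℝ → ℝ} (hD : ConcaveOn ℝ Set.univ D) (hDm : Monotone D)
    (hf : ConcaveOn ℝ Set.univ f) : ConcaveOn ℝ Set.univ (fun e => D (f e)) := by
  refine ⟨convex_univ, fun x _ y _ a b ha hb hab => ?_⟩
  calc a • D (f x) + b • D (f y) ≤ D (a • f x + b • f y) :=
        hD.2 (Set.mem_univ _) (Set.mem_univ _) ha hb hab
    _ ≤ D (f (a • x + b • y)) := hDm (hf.2 (Set.mem_univ _) (Set.mem_univ _) ha hb hab)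

/-- `t ↦ C (exp t)` is concave when `x C''(x) + C'(x) ≤ 0` on `(0,∞)`. -/
lemma concave_C_exp (C C' C'' : ℝ → ℝ)
    (hC' : ∀ x > (0 : ℝ), HasDerivAt C (C' x) x)
    (hC'' : ∀ x > (0 : ℝ), HasDerivAt C' (C'' x) x)
    (hcond : ∀ x > (0 : ℝ), x * C'' x + C' x ≤ 0) :
    ConcaveOn ℝ Set.univ (fun t => C (Real.exp t)) := by
  have hd1 : ∀ t : ℝ, HasDerivAt (fun t => C (Real.exp t))
      (C' (Real.exp t) * Real.exp t) t := fun t =>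
    (hC' _ (Real.exp_pos t)).comp t (Real.hasDerivAt_exp t)
  have hd2 : ∀ t : ℝ, HasDerivAt (fun t => C' (Real.exp t) * Real.exp t)
      (C'' (Real.exp t) * Real.exp t * Real.exp t + C' (Real.exp t) * Real.exp t) t := fun t =>
    ((hC'' _ (Real.exp_pos t)).comp t (Real.hasDerivAt_exp t)).mul (Real.hasDerivAt_exp t)
  refine concaveOn_of_hasDerivWithinAt2_nonpos (f' := fun t => C' (Real.exp t) * Real.exp t)
    (f'' := fun t => C'' (Real.exp t) * Real.exp t * Real.exp t + C' (Real.exp t) * Real.exp t)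
    convex_univ (fun t _ => (hd1 t).continuousAt.continuousWithinAt)
    (fun t _ => (hd1 t).hasDerivWithinAt) (fun t _ => (hd2 t).hasDerivWithinAt) ?_
  intro t _
  have h := hcond (Real.exp t) (Real.exp_pos t)
  have he : 0 < Real.exp t := Real.exp_pos t
  show C'' (Real.exp t) * Real.exp t * Real.exp t + C' (Real.exp t) * Real.exp t ≤ 0
  nlinarith [mul_nonpos_of_nonneg_of_nonpos he.le h]

/-- If `C` is twice differentiable on `(0, ∞)`, nondecreasing there, and
`x·C''(x) + C'(x) ≤ 0` for all `x > 0`, then for positive gains `g k` and noise `N > 0`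
the map `(s₀, s) ↦ C (exp s₀ / (∑ k, g k · exp (s k) + N))` is concave on `ℝ^(m+1)`. -/
theorem stmt_1 (C C' C'' : ℝ → ℝ)
    (hC' : ∀ x > (0 : ℝ), HasDerivAt C (C' x) x)
    (hC'' : ∀ x > (0 : ℝ), HasDerivAt C' (C'' x) x)
    (hmono : ∀ x y : ℝ, 0 < x → x ≤ y → C x ≤ C y)
    (hcond : ∀ x > (0 : ℝ), x * C'' x + C' x ≤ 0)
    (m : ℕ) (hm : 1 ≤ m) (g : Fin m → ℝ) (hg : ∀ k, 0 < g k) (N : ℝ) (hN : 0 < N) :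
    ConcaveOn ℝ Set.univ
      (fun s : ℝ × (Fin m → ℝ) =>
        C (Real.exp s.1 / (∑ k, g k * Real.exp (s.2 k) + N))) := by
  -- positivity of denominators
  have hden : ∀ s : ℝ × (Fin m → ℝ), 0 < ∑ k, g k * Real.exp (s.2 k) + N := by
    intro s
    have : 0 ≤ ∑ k, g k * Real.exp (s.2 k) :=
      Finset.sum_nonneg fun k _ => mul_nonneg (hg k).le (Real.exp_pos _).le
    linarith
  -- the inner concave function
  set h : ℝ × (Fin m → ℝ) → ℝ :=
    fun s => s.1 - Real.log (∑ k, g k * Real.exp (s.2 k) + N) with hh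
  have hfeq : (fun s : ℝ × (Fin m → ℝ) =>
      C (Real.exp s.1 / (∑ k, g k * Real.exp (s.2 k) + N))) =
      fun s => C (Real.exp (h s)) := by
    funext s
    rw [hh]
    simp only
    rw [Real.exp_sub, Real.exp_log (hden s)]
  rw [hfeq]
  -- convexity of the log-sum-exp part
  have hL : ConvexOn ℝ Set.univ
      (fun s : ℝ × (Fin m → ℝ) => Real.log (∑ k, g k * Real.exp (s.2 k) + N)) := by
    refine ⟨convex_univ, fun x _ y _ a b ha hb hab => ?_⟩
    have key := lse_key m g hg N hN x.2 y.2 a b ha hb hab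
    have hx := hden x
    have hy := hden y
    have harg : (fun s : ℝ × (Fin m → ℝ) => Real.log (∑ k, g k * Real.exp (s.2 k) + N))
        (a • x + b • y)
        = Real.log (∑ k, g k * Real.exp (a * x.2 k + b * y.2 k) + N) := by
      simp [Prod.smul_snd, smul_eq_mul]
    rw [harg]
    have hlhs : 0 < ∑ k, g k * Real.exp (a * x.2 k + b * y.2 k) + N := by
      have : 0 ≤ ∑ k, g k * Real.exp (a * x.2 k + b * y.2 k) :=
        Finset.sum_nonneg fun k _ => mul_nonneg (hg k).le (Real.exp_pos _).le
      linarith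
    calc Real.log (∑ k, g k * Real.exp (a * x.2 k + b * y.2 k) + N)
        ≤ Real.log ((∑ k, g k * Real.exp (x.2 k) + N) ^ a *
            (∑ k, g k * Real.exp (y.2 k) + N) ^ b) := Real.log_le_log hlhs key
      _ = a * Real.log (∑ k, g k * Real.exp (x.2 k) + N)
            + b * Real.log (∑ k, g k * Real.exp (y.2 k) + N) := by
          rw [Real.log_mul (Real.rpow_pos_of_pos hx a).ne' (Real.rpow_pos_of_pos hy b).ne',
            Real.log_rpow hx, Real.log_rpow hy]
      _ = a • (fun s : ℝ × (Fin m → ℝ) => Real.log (∑ k, g k * Real.exp (s.2 k) + N)) x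
            + b • (fun s : ℝ × (Fin m → ℝ) => Real.log (∑ k, g k * Real.exp (s.2 k) + N)) y := by
          simp [smul_eq_mul]
  -- concavity of h : linear part minus convex part
  have hfst : ConcaveOn ℝ Set.univ (fun s : ℝ × (Fin m → ℝ) => s.1) := by
    refine ⟨convex_univ, fun x _ y _ a b ha hb hab => ?_⟩
    simp [Prod.smul_fst, smul_eq_mul]
  have hhconc : ConcaveOn ℝ Set.univ h := hfst.sub hL
  -- monotone concave outer function
  have hD : ConcaveOn ℝ Set.univ (fun t => C (Real.exp t)) :=
    concave_C_exp C C' C'' hC' hC'' hcond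
  have hDm : Monotone (fun t => C (Real.exp t)) := fun t u htu =>
    hmono _ _ (Real.exp_pos t) (Real.exp_le_exp.2 htu)
  exact concave_comp_mono (f := h) (D := fun t => C (Real.exp t)) hD hDm hhconc
end

section
/- With the network flow model below, suppose that for every session w there are real numbers g_i(w) for each node i satisfying g_{D(w)}(w) = 0 and, for every node i ≠ D(w), g_i(w) = Σ_{j : (i,j) ∈ ℰ} φ_{ij}(w)·( a_{ij} + g_j(w) ). Then Σ_{(i,j) ∈ ℰ} a_{ij}·F_{ij} = Σ_{w ∈ 𝒲} g_{O(w)}(w)·r_w. -/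
open Finset

lemma sumE_left {𝒩 : Type*} [Fintype 𝒩] [DecidableEq 𝒩] (E : Finset (𝒩 × 𝒩)) (f : 𝒩 → 𝒩 → ℝ) :
    ∑ e ∈ E, f e.1 e.2 = ∑ i, ∑ j ∈ univ.filter (fun j => (i, j) ∈ E), f i j := by
  have h1 : ∑ e ∈ E, f e.1 e.2 = ∑ e ∈ (univ ×ˢ univ).filter (· ∈ E), f e.1 e.2 := by
    congr 1; ext e; simp
  rw [h1, sum_filter, Finset.sum_product]
  simp [sum_filter]

lemma sumE_right {𝒩 : Type*} [Fintype 𝒩] [DecidableEq 𝒩] (E : Finset (𝒩 × 𝒩)) (f : 𝒩 → 𝒩 → ℝ) :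
    ∑ e ∈ E, f e.1 e.2 = ∑ j, ∑ i ∈ univ.filter (fun i => (i, j) ∈ E), f i j := by
  have h1 : ∑ e ∈ E, f e.1 e.2 = ∑ e ∈ (univ ×ˢ univ).filter (· ∈ E), f e.1 e.2 := by
    congr 1; ext e; simp
  rw [h1, sum_filter, Finset.sum_product_right]
  simp [sum_filter]

/-- Lemma 1 (link/node marginal-cost identity): in the multi-commodity flow model with
routing variables `φ`, throughputs `t`, link flows `F`, and node marginal costs `g`
satisfying the stated recursions, `∑_{(i,j)∈ℰ} a_{ij} F_{ij} = ∑_w g_{O(w)}(w) r_w`. -/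
theorem stmt_2 {𝒩 𝒲 : Type*} [Fintype 𝒩] [DecidableEq 𝒩] [Fintype 𝒲]
    (E : Finset (𝒩 × 𝒩))
    (O D : 𝒲 → 𝒩) (hOD : ∀ w, O w ≠ D w)
    (r : 𝒲 → ℝ) (hr : ∀ w, 0 ≤ r w)
    (φ : 𝒩 → 𝒩 → 𝒲 → ℝ)
    (hφ_nonneg : ∀ i j w, 0 ≤ φ i j w)
    (hφ_sum : ∀ w, ∀ i, i ≠ D w →
      ∑ j ∈ univ.filter (fun j => (i, j) ∈ E), φ i j w = 1)
    (hφ_dest : ∀ w, ∀ j, φ (D w) j w = 0)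
    (t : 𝒩 → 𝒲 → ℝ)
    (ht_origin : ∀ w, t (O w) w = r w)
    (ht_rec : ∀ w, ∀ i, i ≠ O w →
      t i w = ∑ j ∈ univ.filter (fun j => (j, i) ∈ E), t j w * φ j i w)
    (ht_noreturn : ∀ w,
      ∑ j ∈ univ.filter (fun j => (j, O w) ∈ E), t j w * φ j (O w) w = 0)
    (F : 𝒩 → 𝒩 → ℝ)
    (hF : ∀ i j, F i j = ∑ w, t i w * φ i j w)
    (a : 𝒩 → 𝒩 → ℝ)
    (g : 𝒩 → 𝒲 → ℝ)
    (hg_dest : ∀ w, g (D w) w = 0)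
    (hg_rec : ∀ w, ∀ i, i ≠ D w →
      g i w = ∑ j ∈ univ.filter (fun j => (i, j) ∈ E), φ i j w * (a i j + g j w)) :
    ∑ e ∈ E, a e.1 e.2 * F e.1 e.2 = ∑ w, g (O w) w * r w := by
  have key : ∀ w, ∑ e ∈ E, a e.1 e.2 * (t e.1 w * φ e.1 e.2 w) = g (O w) w * r w := by
    intro w
    -- g recursion holds at every node (trivially at D)
    have hg_all : ∀ i, g i w = ∑ j ∈ univ.filter (fun j => (i, j) ∈ E), φ i j w * (a i j + g j w) := by
      intro i
      by_cases hi : i = D w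
      · subst hi; simp [hg_dest w, hφ_dest w]
      · exact hg_rec w i hi
    have hS : ∑ i, t i w * g i w
        = ∑ e ∈ E, a e.1 e.2 * (t e.1 w * φ e.1 e.2 w)
          + ∑ e ∈ E, t e.1 w * φ e.1 e.2 w * g e.2 w := by
      rw [sumE_left E (fun i j => a i j * (t i w * φ i j w)),
          sumE_left E (fun i j => t i w * φ i j w * g j w), ← Finset.sum_add_distrib]
      refine Finset.sum_congr rfl fun i _ => ?_
      rw [hg_all i, Finset.mul_sum, ← Finset.sum_add_distrib]
      refine Finset.sum_congr rfl fun j _ => ?_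
      ring
    have hT : ∑ e ∈ E, t e.1 w * φ e.1 e.2 w * g e.2 w
        = ∑ i, t i w * g i w - g (O w) w * r w := by
      rw [sumE_right E (fun i j => t i w * φ i j w * g j w)]
      have : ∀ j, ∑ i ∈ univ.filter (fun i => (i, j) ∈ E), t i w * φ i j w * g j w
          = (if j = O w then 0 else t j w) * g j w := by
        intro j
        rw [← Finset.sum_mul]
        by_cases hj : j = O w
        · subst hj; rw [ht_noreturn w]; simp
        · rw [← ht_rec w j hj]; simp [hj]
      simp only [this]
      have h2 : ∑ j, (if j = O w then 0 else t j w) * g j w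
          = ∑ j, (t j w * g j w - if j = O w then t j w * g j w else 0) := by
        refine Finset.sum_congr rfl fun j _ => ?_
        by_cases hj : j = O w <;> simp [hj]
      rw [h2, Finset.sum_sub_distrib,
        Finset.sum_ite_eq' univ (O w) (fun j => t j w * g j w)]
      simp [ht_origin w]
      ring
    linarith [hS, hT]
  simp only [hF, Finset.mul_sum]
  rw [Finset.sum_comm]
  exact Finset.sum_congr rfl fun w _ => key w
end

section
/- Let K ⊆ ℝⁿ be a nonempty convex set, let f : ℝⁿ → ℝ be twice continuously differentiable, let M be a real symmetric positive-definite n×n matrix, and let x ∈ K. Suppose x⁺ minimizes the function y ↦ ⟨∇f(x), y − x⟩ + (1/2)⟨y − x, M(y − x)⟩ over K, and suppose that for every λ ∈ [0,1] and every v ∈ ℝⁿ, ⟨v, ∇²f(λx + (1−λ)x⁺)·v⟩ ≤ 2·⟨v, M v⟩. Then f(x⁺) ≤ f(x). Moreover, if the Hessian inequality is strict for every v ≠ 0 and x⁺ ≠ x, then f(x⁺) < f(x). -/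
open Matrix RealInnerProductSpace

/-- Descent step of a scaled gradient projection algorithm: if `x⁺` minimizes
`y ↦ ⟨∇f(x), y − x⟩ + ½⟨y − x, M(y − x)⟩` over the convex set `K`, and `2M` upper bounds
the Hessian of `f` along the segment `[x, x⁺]`, then `f(x⁺) ≤ f(x)`; the inequality is
strict if the Hessian bound is strict (for `v ≠ 0`) and `x⁺ ≠ x`. -/
theorem stmt_4 {n : ℕ} (K : Set (EuclideanSpace ℝ (Fin n))) (hKne : K.Nonempty)
    (hK : Convex ℝ K)
    (f : EuclideanSpace ℝ (Fin n) → ℝ) (hf : ContDiff ℝ 2 f)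
    (grad : EuclideanSpace ℝ (Fin n) → EuclideanSpace ℝ (Fin n))
    (hgrad : ∀ z, HasGradientAt f (grad z) z)
    (hess : EuclideanSpace ℝ (Fin n) → Matrix (Fin n) (Fin n) ℝ)
    (hhess : ∀ z, HasFDerivAt grad (Matrix.toEuclideanCLM (𝕜 := ℝ) (hess z)) z)
    (M : Matrix (Fin n) (Fin n) ℝ) (hM : M.PosDef)
    (x xp : EuclideanSpace ℝ (Fin n)) (hx : x ∈ K) (hxp : xp ∈ K)
    (hmin : IsMinOn
      (fun y : EuclideanSpace ℝ (Fin n) =>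
        ⟪grad x, y - x⟫ + (1 / 2) * ⟪y - x, (Matrix.toEuclideanCLM (𝕜 := ℝ) M) (y - x)⟫)
      K xp)
    (hbound : ∀ l ∈ Set.Icc (0 : ℝ) 1, ∀ v : EuclideanSpace ℝ (Fin n),
      ⟪v, (Matrix.toEuclideanCLM (𝕜 := ℝ) (hess (l • x + (1 - l) • xp))) v⟫
        ≤ 2 * ⟪v, (Matrix.toEuclideanCLM (𝕜 := ℝ) M) v⟫) :
    f xp ≤ f x ∧
      ((∀ l ∈ Set.Icc (0 : ℝ) 1, ∀ v : EuclideanSpace ℝ (Fin n), v ≠ 0 →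
          ⟪v, (Matrix.toEuclideanCLM (𝕜 := ℝ) (hess (l • x + (1 - l) • xp))) v⟫
            < 2 * ⟪v, (Matrix.toEuclideanCLM (𝕜 := ℝ) M) v⟫) →
        xp ≠ x → f xp < f x) := by
  set Mc := Matrix.toEuclideanCLM (𝕜 := ℝ) M with hMc
  set d : EuclideanSpace ℝ (Fin n) := xp - x with hd
  set g : EuclideanSpace ℝ (Fin n) := grad x with hg
  set q : ℝ := ⟪d, Mc d⟫ with hq
  -- Step A : ⟪g, d⟫ + q ≤ 0 from optimality of xp
  have hA : ⟪g, d⟫ + q ≤ 0 := by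
    have hstep : ∀ t ∈ Set.Ioc (0:ℝ) 1, ⟪g, d⟫ + q ≤ t * q / 2 := by
      intro t ht
      have h0t : (0:ℝ) ≤ t := ht.1.le
      have h1t : (0:ℝ) ≤ 1 - t := by linarith [ht.2]
      have hmem : t • x + (1 - t) • xp ∈ K := hK hx hxp h0t h1t (by ring)
      have hpt : t • x + (1 - t) • xp = x + (1 - t) • d := by
        rw [hd]; module
      rw [hpt] at hmem
      have h1 := isMinOn_iff.mp hmin _ hmem
      simp only [add_sub_cancel_left, sub_sub_cancel_left] at h1
      have h2 : ⟪g, (1 - t) • d⟫ = (1 - t) * ⟪g, d⟫ := real_inner_smul_right g d (1 - t)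
      have h3 : ⟪(1 - t) • d, Mc ((1 - t) • d)⟫ = (1 - t) ^ 2 * q := by
        rw [_root_.map_smul, real_inner_smul_left, real_inner_smul_right, hq]; ring
      have h4 : xp - x = d := rfl
      rw [h4, h2, h3] at h1
      nlinarith [ht.1]
    have htend : Filter.Tendsto (fun t : ℝ => t * q / 2) (nhdsWithin 0 (Set.Ioi 0)) (nhds 0) := by
      have h1 : Continuous (fun t : ℝ => t * q / 2) := by fun_prop
      have h2 := (h1.tendsto 0).mono_left
        (nhdsWithin_le_nhds (s := Set.Ioi (0:ℝ)) (a := (0:ℝ)))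
      simpa using h2
    refine ge_of_tendsto htend ?_
    filter_upwards [Ioc_mem_nhdsGT_of_mem (Set.left_mem_Ico.mpr one_pos)] with t ht
    exact hstep t ht
  -- Step B : Taylor-type bound along the segment
  set γ : ℝ → EuclideanSpace ℝ (Fin n) := fun t => x + t • d with hγdef
  have hγ : ∀ t : ℝ, HasDerivAt γ d t := by
    intro t
    have : HasDerivAt (fun s : ℝ => s • d) ((1:ℝ) • d) t := (hasDerivAt_id t).smul_const d
    have h := this.const_add x
    simp only [one_smul] at h
    exact h
  have hγ0 : γ 0 = x := by simp [hγdef]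
  have hγ1 : γ 1 = xp := by simp [hγdef, hd]
  have hγpt : ∀ t : ℝ, (1 - t) • x + (1 - (1 - t)) • xp = γ t := by
    intro t; rw [hγdef]; simp only [hd]; module
  -- first derivative
  have hφ' : ∀ t : ℝ, HasDerivAt (fun s => f (γ s)) ⟪grad (γ t), d⟫ t := by
    intro t
    have h1 := (hgrad (γ t)).hasFDerivAt.comp_hasDerivAt t (hγ t)
    simp at h1
    exact h1
  -- derivative of t ↦ ⟪grad (γ t), d⟫
  have hφ'' : ∀ t : ℝ, HasDerivAt (fun s => ⟪grad (γ s), d⟫)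
      ⟪(Matrix.toEuclideanCLM (𝕜 := ℝ) (hess (γ t))) d, d⟫ t := by
    intro t
    have h1 : HasDerivAt (fun s => grad (γ s))
        ((Matrix.toEuclideanCLM (𝕜 := ℝ) (hess (γ t))) d) t :=
      HasFDerivAt.comp_hasDerivAt t (hhess (γ t)) (hγ t)
    have h2 := (h1.inner ℝ (hasDerivAt_const t d))
    simpa using h2
  have hHle : ∀ t ∈ Set.Icc (0:ℝ) 1,
      ⟪(Matrix.toEuclideanCLM (𝕜 := ℝ) (hess (γ t))) d, d⟫ ≤ 2 * q := by
    intro t ht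
    have h1 := hbound (1 - t) (by constructor <;> [linarith [ht.2]; linarith [ht.1]]) d
    rw [hγpt t] at h1
    rw [real_inner_comm]
    exact h1
  set φ₁ : ℝ → ℝ := fun t => ⟪grad (γ t), d⟫ with hφ₁def
  set ψ : ℝ → ℝ := fun t => f (γ t) - f x - t * ⟪g, d⟫ - q * t ^ 2 with hψdef
  set ψ' : ℝ → ℝ := fun t => φ₁ t - ⟪g, d⟫ - 2 * q * t with hψ'def
  have hψ'0 : ψ' 0 = 0 := by simp [hψ'def, hφ₁def, hγ0, hg]
  have hψd : ∀ t : ℝ, HasDerivAt ψ (ψ' t) t := by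
    intro t
    have h1 : HasDerivAt (fun s : ℝ => s * ⟪g, d⟫) ⟪g, d⟫ t := by
      simpa using (hasDerivAt_id t).mul_const ⟪g, d⟫
    have h2 : HasDerivAt (fun s : ℝ => q * s ^ 2) (2 * q * t) t := by
      have := ((hasDerivAt_pow 2 t).const_mul q)
      simpa [mul_comm, mul_assoc, mul_left_comm] using this
    have := (((hφ' t).sub_const (f x)).sub h1).sub h2
    exact this
  have hψ'd : ∀ t : ℝ, HasDerivAt ψ'
      (⟪(Matrix.toEuclideanCLM (𝕜 := ℝ) (hess (γ t))) d, d⟫ - 2 * q) t := by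
    intro t
    have h2 : HasDerivAt (fun s : ℝ => 2 * q * s) (2 * q) t := by
      simpa using (hasDerivAt_id t).const_mul (2 * q)
    have := ((hφ'' t).sub_const ⟪g, d⟫).sub h2
    simp [hψ'def, hφ₁def] at this
    exact this
  have hγc : Continuous γ := by
    rw [hγdef]; fun_prop
  have hψ'cont : Continuous ψ' := by
    have hgradc : Continuous grad :=
      continuous_iff_continuousAt.mpr fun z => (hhess z).differentiableAt.continuousAt
    exact ((Continuous.inner (hgradc.comp hγc) continuous_const).sub
      continuous_const).sub (continuous_const.mul continuous_id)
  have hψcont : Continuous ψ := by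
    rw [hψdef]
    exact (((hf.continuous.comp hγc).sub continuous_const).sub
      (continuous_id.mul continuous_const)).sub (continuous_const.mul (continuous_pow 2))
  have hψ0 : ψ 0 = 0 := by simp [hψdef, hγ0]
  have hψ1 : ψ 1 = f xp - f x - ⟪g, d⟫ - q := by simp [hψdef, hγ1]
  -- weak inequality
  have hweak : f xp ≤ f x := by
    have hanti' : AntitoneOn ψ' (Set.Icc 0 1) := by
      refine antitoneOn_of_deriv_nonpos (convex_Icc 0 1) hψ'cont.continuousOn
        (fun t _ => (hψ'd t).differentiableAt.differentiableWithinAt) ?_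
      intro t ht
      rw [interior_Icc] at ht
      rw [(hψ'd t).deriv]
      have := hHle t ⟨le_of_lt ht.1, le_of_lt ht.2⟩
      linarith
    have hψ'le : ∀ t ∈ Set.Icc (0:ℝ) 1, ψ' t ≤ 0 := by
      intro t ht
      calc ψ' t ≤ ψ' 0 := hanti' (Set.left_mem_Icc.mpr zero_le_one) ht ht.1
        _ = 0 := hψ'0
    have hanti : AntitoneOn ψ (Set.Icc 0 1) := by
      refine antitoneOn_of_deriv_nonpos (convex_Icc 0 1) hψcont.continuousOn
        (fun t _ => (hψd t).differentiableAt.differentiableWithinAt) ?_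
      intro t ht
      rw [interior_Icc] at ht
      rw [(hψd t).deriv]
      exact hψ'le t ⟨le_of_lt ht.1, le_of_lt ht.2⟩
    have := hanti (Set.left_mem_Icc.mpr zero_le_one) (Set.right_mem_Icc.mpr zero_le_one)
      zero_le_one
    rw [hψ0, hψ1] at this
    linarith
  refine ⟨hweak, ?_⟩
  intro hS hne
  have hdne : d ≠ 0 := sub_ne_zero.mpr hne
  have hHlt : ∀ t ∈ Set.Icc (0:ℝ) 1,
      ⟪(Matrix.toEuclideanCLM (𝕜 := ℝ) (hess (γ t))) d, d⟫ < 2 * q := by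
    intro t ht
    have h1 := hS (1 - t) (by constructor <;> [linarith [ht.2]; linarith [ht.1]]) d hdne
    rw [hγpt t] at h1
    rw [real_inner_comm]
    exact h1
  have hanti' : StrictAntiOn ψ' (Set.Icc 0 1) := by
    refine strictAntiOn_of_deriv_neg (convex_Icc 0 1) hψ'cont.continuousOn ?_
    intro t ht
    rw [interior_Icc] at ht
    rw [(hψ'd t).deriv]
    have := hHlt t ⟨le_of_lt ht.1, le_of_lt ht.2⟩
    linarith
  have hψ'lt : ∀ t ∈ Set.Ioo (0:ℝ) 1, ψ' t < 0 := by
    intro t ht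
    have := hanti' (Set.left_mem_Icc.mpr zero_le_one) ⟨le_of_lt ht.1, le_of_lt ht.2⟩ ht.1
    rw [hψ'0] at this
    exact this
  have hanti : StrictAntiOn ψ (Set.Icc 0 1) := by
    refine strictAntiOn_of_deriv_neg (convex_Icc 0 1) hψcont.continuousOn ?_
    intro t ht
    rw [interior_Icc] at ht
    rw [(hψd t).deriv]
    exact hψ'lt t ht
  have := hanti (Set.left_mem_Icc.mpr zero_le_one) (Set.right_mem_Icc.mpr zero_le_one)
    one_pos
  rw [hψ0, hψ1] at this
  linarith
end

section
/- Let H be a real symmetric n×n matrix and let a, b ∈ ℝⁿ have nonnegative entries. Suppose H_{jj} ≤ a_j + b_j for every j, and 0 ≤ H_{jk} ≤ √(b_j·b_k) for all j ≠ k. Then for every v ∈ ℝⁿ, vᵀ H v ≤ Σ_j (a_j + n·b_j)·v_j². -/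
open Matrix Finset

/-- Diagonal upper bound on a symmetric matrix whose diagonal entries are bounded by
`a j + b j` and whose off-diagonal entries lie in `[0, √(b j · b k)]`: for every `v`,
`vᵀ H v ≤ ∑ j (a j + n·b j) v j²`. -/
theorem stmt_5 {n : ℕ} (H : Matrix (Fin n) (Fin n) ℝ) (hH : H.IsSymm)
    (a b : Fin n → ℝ) (ha : ∀ j, 0 ≤ a j) (hb : ∀ j, 0 ≤ b j)
    (hdiag : ∀ j, H j j ≤ a j + b j)
    (hoff_nonneg : ∀ j k, j ≠ k → 0 ≤ H j k)
    (hoff_bound : ∀ j k, j ≠ k → H j k ≤ Real.sqrt (b j * b k)) :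
    ∀ v : Fin n → ℝ, v ⬝ᵥ H.mulVec v ≤ ∑ j, (a j + (n : ℝ) * b j) * (v j) ^ 2 := by
  intro v
  have key : v ⬝ᵥ H.mulVec v ≤
      ∑ j, ∑ k, ((if j = k then a j * v j ^ 2 else 0)
        + (b j * v j ^ 2 + b k * v k ^ 2) / 2) := by
    rw [dotProduct, ]
    simp only [Matrix.mulVec, dotProduct]
    rw [show ∑ j, v j * ∑ k, H j k * v k = ∑ j, ∑ k, v j * (H j k * v k) by
      simp [Finset.mul_sum]]
    apply Finset.sum_le_sum
    intro j _
    apply Finset.sum_le_sum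
    intro k _
    by_cases hjk : j = k
    · subst hjk
      simp only [if_pos rfl, if_true]
      have h := hdiag j
      have hv := sq_nonneg (v j)
      nlinarith
    · simp only [if_neg hjk, zero_add]
      have h0 := hoff_nonneg j k hjk
      have h1 := hoff_bound j k hjk
      set s := Real.sqrt (b j * b k) with hs
      have hs0 : 0 ≤ s := Real.sqrt_nonneg _
      have hs2 : s ^ 2 = b j * b k := Real.sq_sqrt (mul_nonneg (hb j) (hb k))
      have habs : v j * v k ≤ |v j * v k| := le_abs_self _
      have habs0 : 0 ≤ |v j * v k| := abs_nonneg _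
      have habs2 : |v j * v k| ^ 2 = v j ^ 2 * v k ^ 2 := by
        rw [sq_abs]; ring
      have step1 : v j * (H j k * v k) ≤ s * |v j * v k| := by
        calc v j * (H j k * v k) = H j k * (v j * v k) := by ring
        _ ≤ H j k * |v j * v k| := by
            exact mul_le_mul_of_nonneg_left habs h0
        _ ≤ s * |v j * v k| := mul_le_mul_of_nonneg_right h1 habs0
      refine step1.trans ?_
      nlinarith [sq_nonneg (b j * v j ^ 2 - b k * v k ^ 2),
        sq_nonneg (b j * v j ^ 2 + b k * v k ^ 2 - 2 * (s * |v j * v k|)),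
        mul_nonneg (hb j) (sq_nonneg (v j)), mul_nonneg (hb k) (sq_nonneg (v k)),
        mul_nonneg hs0 habs0]
  refine key.trans (le_of_eq ?_)
  have hdiagsum : ∀ j : Fin n, ∑ k, (if j = k then a j * v j ^ 2 else 0) = a j * v j ^ 2 := by
    intro j; simp
  simp only [Finset.sum_add_distrib, hdiagsum]
  have h2 : ∑ j : Fin n, ∑ k : Fin n, (b j * v j ^ 2 + b k * v k ^ 2) / 2
      = (n : ℝ) * ∑ j, b j * v j ^ 2 := by
    have hrow : ∀ j : Fin n, ∑ k, (b j * v j ^ 2 + b k * v k ^ 2) / 2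
        = (n : ℝ) * (b j * v j ^ 2) / 2 + (∑ k, b k * v k ^ 2) / 2 := by
      intro j
      rw [← Finset.sum_div, Finset.sum_add_distrib, Finset.sum_const, card_univ,
        Fintype.card_fin, nsmul_eq_mul, add_div]
    simp only [hrow]
    rw [Finset.sum_add_distrib, Finset.sum_const, card_univ, Fintype.card_fin, nsmul_eq_mul]
    rw [← Finset.sum_div, ← Finset.mul_sum]
    ring
  rw [h2, Finset.mul_sum, ← Finset.sum_add_distrib]
  exact Finset.sum_congr rfl fun j _ => by ring
end

section
/- Let K ≥ 2, a > 0 and b > 0 be real constants and define f(η) = log( 1 + K·a·η / ( a·(1−η) + b ) ) for η ∈ [0,1]. If the interference-limited condition K·a·η ≤ (K−2)·( a·(1−η) + b ) holds at a point η ∈ (0,1), then f''(η) ≤ 0; consequently f is concave on any subinterval of [0,1] on which this condition holds. -/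
/-- Concavity of the precise CDMA link capacity in the power allocation fraction under the
interference-limited condition: if `K·a·η ≤ (K−2)·(a·(1−η)+b)` at `η ∈ (0,1)` then
`f''(η) ≤ 0` for `f(η) = log(1 + K·a·η/(a(1−η)+b))`; consequently `f` is concave on any
subinterval of `[0,1]` on which the condition holds. -/
theorem stmt_6 (K a b : ℝ) (hK : 2 ≤ K) (ha : 0 < a) (hb : 0 < b)
    (f : ℝ → ℝ)
    (hf : ∀ η ∈ Set.Icc (0 : ℝ) 1,
      f η = Real.log (1 + K * a * η / (a * (1 - η) + b))) :
    (∀ η ∈ Set.Ioo (0 : ℝ) 1,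
        K * a * η ≤ (K - 2) * (a * (1 - η) + b) → deriv (deriv f) η ≤ 0) ∧
    (∀ p q : ℝ, 0 ≤ p → q ≤ 1 →
        (∀ η ∈ Set.Icc p q, K * a * η ≤ (K - 2) * (a * (1 - η) + b)) →
        ConcaveOn ℝ (Set.Icc p q) f) := by
  have hK1 : 0 < K - 1 := by linarith
  set c : ℝ := a + b with hcdef
  set d : ℝ := a * (K - 1) with hddef
  have hc : 0 < c := by positivity
  have hd : 0 < d := by positivity
  set F : ℝ → ℝ := fun η => Real.log (c + d * η) - Real.log (c - a * η) with hFdef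
  set G : ℝ → ℝ := fun η => d / (c + d * η) + a / (c - a * η) with hGdef
  set H : ℝ → ℝ := fun η => -(d * d) / (c + d * η) ^ 2 + a * a / (c - a * η) ^ 2 with hHdef
  have hpos1 : ∀ η ∈ Set.Icc (0:ℝ) 1, 0 < c + d * η := by
    intro η hη
    have h1 := hη.1
    nlinarith
  have hpos2 : ∀ η ∈ Set.Icc (0:ℝ) 1, 0 < c - a * η := by
    intro η hη
    have h2 := hη.2
    nlinarith
  have heq : ∀ η ∈ Set.Icc (0:ℝ) 1, f η = F η := by
    intro η hη
    have h1 := hpos1 η hη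
    have h2 := hpos2 η hη
    rw [hf η hη]
    have harg : 1 + K * a * η / (a * (1 - η) + b) = (c + d * η) / (c - a * η) := by
      have hne : a * (1 - η) + b ≠ 0 := by
        have : a * (1 - η) + b = c - a * η := by rw [hcdef]; ring
        rw [this]; exact h2.ne'
      have hne' : a + b - a * η ≠ 0 := by rw [hcdef] at h2; exact h2.ne'
      rw [hcdef, hddef]
      field_simp
      ring
    rw [harg, Real.log_div h1.ne' h2.ne']
  have hFd : ∀ η, 0 < c + d * η → 0 < c - a * η → HasDerivAt F (G η) η := by
    intro η h1 h2
    have hd1 : HasDerivAt (fun x => c + d * x) d η := by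
      simpa using ((hasDerivAt_id η).const_mul d).const_add c
    have hd2 : HasDerivAt (fun x => c - a * x) (-a) η := by
      simpa using ((hasDerivAt_id η).const_mul a).const_sub c
    have hcomb := (hd1.log h1.ne').sub (hd2.log h2.ne')
    convert hcomb using 1
    · rfl
    · rfl
    · rfl
    rw [hGdef]
    field_simp
    ring
  have hGd : ∀ η, 0 < c + d * η → 0 < c - a * η → HasDerivAt G (H η) η := by
    intro η h1 h2
    have hd1 : HasDerivAt (fun x => c + d * x) d η := by
      simpa using ((hasDerivAt_id η).const_mul d).const_add c
    have hd2 : HasDerivAt (fun x => c - a * x) (-a) η := by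
      simpa using ((hasDerivAt_id η).const_mul a).const_sub c
    have i1 := (hd1.inv h1.ne').const_mul d
    have i2 := (hd2.inv h2.ne').const_mul a
    have hcomb := i1.add i2
    have hGalt : G = fun x => d * (c + d * x)⁻¹ + a * (c - a * x)⁻¹ := by
      funext x; rw [hGdef]; simp [div_eq_mul_inv]
    rw [hGalt]
    convert hcomb using 1
    · rfl
    · rfl
    · rfl
    rw [hHdef]
    field_simp
  have hmemIoo : ∀ {η : ℝ}, η ∈ Set.Ioo (0:ℝ) 1 → η ∈ Set.Icc (0:ℝ) 1 :=
    fun h => Set.Ioo_subset_Icc_self h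
  have hderivf : ∀ η ∈ Set.Ioo (0:ℝ) 1, deriv f η = G η := by
    intro η hη
    have hev : f =ᶠ[nhds η] F :=
      Filter.eventuallyEq_of_mem (Ioo_mem_nhds hη.1 hη.2)
        (fun x hx => heq x (Set.Ioo_subset_Icc_self hx))
    rw [hev.deriv_eq]
    exact (hFd η (hpos1 η (hmemIoo hη)) (hpos2 η (hmemIoo hη))).deriv
  have hderiv2 : ∀ η ∈ Set.Ioo (0:ℝ) 1, deriv (deriv f) η = H η := by
    intro η hη
    have hev : deriv f =ᶠ[nhds η] G :=
      Filter.eventuallyEq_of_mem (Ioo_mem_nhds hη.1 hη.2) (fun x hx => hderivf x hx)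
    rw [hev.deriv_eq]
    exact (hGd η (hpos1 η (hmemIoo hη)) (hpos2 η (hmemIoo hη))).deriv
  have hHle : ∀ η ∈ Set.Icc (0:ℝ) 1,
      K * a * η ≤ (K - 2) * (a * (1 - η) + b) → H η ≤ 0 := by
    intro η hη hcond
    have h1 := hpos1 η hη
    have h2 := hpos2 η hη
    have key : a * (c + d * η) ≤ d * (c - a * η) := by
      rw [hcdef, hddef]; nlinarith
    have hsq : (a * (c + d * η)) ^ 2 ≤ (d * (c - a * η)) ^ 2 := by
      have hnn : 0 ≤ a * (c + d * η) := by positivity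
      exact pow_le_pow_left₀ hnn key 2
    have hdiv : a * a / (c - a * η) ^ 2 ≤ d * d / (c + d * η) ^ 2 := by
      rw [div_le_div_iff₀ (by positivity) (by positivity)]
      nlinarith
    rw [hHdef]
    dsimp only
    have : -(d * d) / (c + d * η) ^ 2 = -(d * d / (c + d * η) ^ 2) := by ring
    rw [this]
    linarith
  constructor
  · intro η hη hcond
    rw [hderiv2 η hη]
    exact hHle η (hmemIoo hη) hcond
  · intro p q hp hq hcond
    have hsub : Set.Icc p q ⊆ Set.Icc (0:ℝ) 1 :=
      fun x hx => ⟨le_trans hp hx.1, le_trans hx.2 hq⟩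
    have hsubI : Set.Ioo p q ⊆ Set.Ioo (0:ℝ) 1 :=
      fun x hx => ⟨lt_of_le_of_lt hp hx.1, lt_of_lt_of_le hx.2 hq⟩
    have hcont : ContinuousOn f (Set.Icc p q) := by
      have hFc : ContinuousOn F (Set.Icc p q) := by
        apply ContinuousOn.sub
        · exact ContinuousOn.log (by fun_prop)
            (fun x hx => (hpos1 x (hsub hx)).ne')
        · exact ContinuousOn.log (by fun_prop)
            (fun x hx => (hpos2 x (hsub hx)).ne')
      exact hFc.congr (fun x hx => heq x (hsub hx))
    refine concaveOn_of_deriv2_nonpos (convex_Icc p q) hcont ?_ ?_ ?_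
    · rw [interior_Icc]
      intro x hx
      have hx' := hsubI hx
      have hev : F =ᶠ[nhds x] f :=
        (Filter.eventuallyEq_of_mem (Ioo_mem_nhds hx'.1 hx'.2)
          (fun y hy => heq y (Set.Ioo_subset_Icc_self hy))).symm
      exact (((hFd x (hpos1 x (hmemIoo hx')) (hpos2 x
        (hmemIoo hx'))).differentiableAt.congr_of_eventuallyEq
        hev.symm).differentiableWithinAt)
    · rw [interior_Icc]
      intro x hx
      have hx' := hsubI hx
      have hev : G =ᶠ[nhds x] deriv f :=
        (Filter.eventuallyEq_of_mem (Ioo_mem_nhds hx'.1 hx'.2)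
          (fun y hy => hderivf y hy)).symm
      exact (((hGd x (hpos1 x (hmemIoo hx')) (hpos2 x
        (hmemIoo hx'))).differentiableAt.congr_of_eventuallyEq
        hev.symm).differentiableWithinAt)
    · rw [interior_Icc]
      intro x hx
      have hx' := hsubI hx
      have : deriv^[2] f x = deriv (deriv f) x := by
        simp [Function.iterate_succ, Function.iterate_one]
      rw [this, hderiv2 x hx']
      exact hHle x (hmemIoo hx') (hcond x (Set.Ioo_subset_Icc_self hx))
end

section
/- Let K ≥ 2, a > 0 and b > 0 be real constants and define f(η) = log( 1 + K·a·η / ( a·(1−η) + b ) ) for η ∈ [0,1]. Let D : ℝ → ℝ be twice differentiable and let B̄ ≥ 0 and B_low ≤ 0 be constants such that 0 ≤ D''(y) ≤ B̄ and B_low ≤ D'(y) ≤ 0 for every y in the range of f on [0,1]. Then for every η ∈ (0,1), (D ∘ f)''(η) ≤ ( B̄·K² − B_low·(K−1)² )·(a/b)². -/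
/-- Hessian bound for the refined power allocation algorithm: with the precise CDMA
capacity `f(η) = log(1 + K·a·η/(a(1−η)+b))` and a twice differentiable cost `D` whose
second derivative lies in `[0, B̄]` and first derivative in `[B_low, 0]` on the range of
`f` on `[0,1]`, one has `(D ∘ f)''(η) ≤ (B̄·K² − B_low·(K−1)²)·(a/b)²` on `(0,1)`. -/
theorem stmt_8 (K a b : ℝ) (hK : 2 ≤ K) (ha : 0 < a) (hb : 0 < b)
    (f : ℝ → ℝ)
    (hf : ∀ η ∈ Set.Icc (0 : ℝ) 1,
      f η = Real.log (1 + K * a * η / (a * (1 - η) + b)))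
    (D D' D'' : ℝ → ℝ)
    (hD' : ∀ y : ℝ, HasDerivAt D (D' y) y)
    (hD'' : ∀ y : ℝ, HasDerivAt D' (D'' y) y)
    (Bbar Blow : ℝ) (hBbar : 0 ≤ Bbar) (hBlow : Blow ≤ 0)
    (hD''bound : ∀ y ∈ f '' Set.Icc (0 : ℝ) 1, 0 ≤ D'' y ∧ D'' y ≤ Bbar)
    (hD'bound : ∀ y ∈ f '' Set.Icc (0 : ℝ) 1, Blow ≤ D' y ∧ D' y ≤ 0) :
    ∀ η ∈ Set.Ioo (0 : ℝ) 1,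
      deriv (deriv (D ∘ f)) η ≤ (Bbar * K ^ 2 - Blow * (K - 1) ^ 2) * (a / b) ^ 2 := by
  intro η hη
  obtain ⟨hη0, hη1⟩ := hη
  have hK1 : (1:ℝ) ≤ K - 1 := by linarith
  set N : ℝ → ℝ := fun x => a + b + (K - 1) * a * x with hNdef
  set dd : ℝ → ℝ := fun x => a * (1 - x) + b with hddef
  set φ : ℝ → ℝ := fun x => Real.log (N x) - Real.log (dd x) with hφdef
  set g1 : ℝ → ℝ := fun x => (K - 1) * a / N x + a / dd x with hg1def
  set g2 : ℝ → ℝ := fun x => a ^ 2 / (dd x) ^ 2 - ((K - 1) * a) ^ 2 / (N x) ^ 2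
    with hg2def
  have hNpos : ∀ x ∈ Set.Icc (0:ℝ) 1, 0 < N x := by
    intro x hx
    have h1 : 0 ≤ (K - 1) * a * x := by
      have := hx.1
      positivity
    simp only [hNdef]
    nlinarith
  have hdpos : ∀ x ∈ Set.Icc (0:ℝ) 1, 0 < dd x := by
    intro x hx
    have h1 : 0 ≤ a * (1 - x) := by
      have := hx.2
      nlinarith
    simp only [hddef]
    nlinarith
  have hfφ : ∀ x ∈ Set.Icc (0:ℝ) 1, f x = φ x := by
    intro x hx
    have hd := hdpos x hx
    have hN := hNpos x hx
    rw [hf x hx, hφdef]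
    have hne : a * (1 - x) + b ≠ 0 := hd.ne'
    have : 1 + K * a * x / (a * (1 - x) + b) = N x / dd x := by
      field_simp [hddef, hNdef]
      ring
    rw [this, Real.log_div hN.ne' hd.ne']
  -- derivatives of φ on Ioo
  have hφ' : ∀ x ∈ Set.Ioo (0:ℝ) 1, HasDerivAt φ (g1 x) x := by
    intro x hx
    have hN := hNpos x (Set.Ioo_subset_Icc_self hx)
    have hd := hdpos x (Set.Ioo_subset_Icc_self hx)
    have h1 : HasDerivAt N ((K - 1) * a) x := by
      have := ((hasDerivAt_id x).const_mul ((K - 1) * a)).const_add (a + b)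
      simpa [hNdef, mul_comm] using this
    have h2 : HasDerivAt dd (-a) x := by
      have := (((hasDerivAt_const x (1:ℝ)).sub (hasDerivAt_id x)).const_mul a).add_const b
      simpa [hddef] using this
    have hl1 : HasDerivAt (fun x => Real.log (N x)) ((K - 1) * a / N x) x :=
      h1.log hN.ne'
    have hl2 : HasDerivAt (fun x => Real.log (dd x)) (-a / dd x) x :=
      h2.log hd.ne'
    have := hl1.sub hl2
    simpa [hφdef, hg1def, neg_div, sub_neg_eq_add, Pi.sub_def] using this
  -- derivative of g1 at η
  have hηmem : η ∈ Set.Ioo (0:ℝ) 1 := ⟨hη0, hη1⟩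
  have hηIcc : η ∈ Set.Icc (0:ℝ) 1 := Set.Ioo_subset_Icc_self hηmem
  have hN := hNpos η hηIcc
  have hd := hdpos η hηIcc
  have h1 : HasDerivAt N ((K - 1) * a) η := by
    have := ((hasDerivAt_id η).const_mul ((K - 1) * a)).const_add (a + b)
    simpa [hNdef, mul_comm] using this
  have h2 : HasDerivAt dd (-a) η := by
    have := (((hasDerivAt_const η (1:ℝ)).sub (hasDerivAt_id η)).const_mul a).add_const b
    simpa [hddef] using this
  have hg1' : HasDerivAt g1 (g2 η) η := by
    have ha1 : HasDerivAt (fun x => (K - 1) * a / N x)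
        ((0 * N η - (K - 1) * a * ((K - 1) * a)) / (N η) ^ 2) η :=
      (hasDerivAt_const η ((K - 1) * a)).div h1 hN.ne'
    have ha2 : HasDerivAt (fun x => a / dd x)
        ((0 * dd η - a * (-a)) / (dd η) ^ 2) η :=
      (hasDerivAt_const η a).div h2 hd.ne'
    have := ha1.add ha2
    have heq : (0 * N η - (K - 1) * a * ((K - 1) * a)) / (N η) ^ 2
        + (0 * dd η - a * (-a)) / (dd η) ^ 2 = g2 η := by
      simp only [hg2def]
      field_simp
      ring
    rw [heq] at this
    exact this
  -- deriv (D ∘ f) agrees with x ↦ D' (φ x) * g1 x on Ioo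
  have hderiv1 : ∀ x ∈ Set.Ioo (0:ℝ) 1, deriv (D ∘ f) x = D' (φ x) * g1 x := by
    intro x hx
    have hev : f =ᶠ[nhds x] φ :=
      Filter.eventuallyEq_of_mem (isOpen_Ioo.mem_nhds hx)
        (fun y hy => hfφ y (Set.Ioo_subset_Icc_self hy))
    have hev2 : (D ∘ f) =ᶠ[nhds x] (D ∘ φ) := hev.fun_comp D
    rw [hev2.deriv_eq]
    exact (((hD' (φ x)).comp x (hφ' x hx)).deriv)
  have hstep : deriv (deriv (D ∘ f)) η = deriv (fun x => D' (φ x) * g1 x) η := by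
    have hev : deriv (D ∘ f) =ᶠ[nhds η] (fun x => D' (φ x) * g1 x) :=
      Filter.eventuallyEq_of_mem (isOpen_Ioo.mem_nhds hηmem) hderiv1
    exact hev.deriv_eq
  have hψ : HasDerivAt (fun x => D' (φ x) * g1 x)
      (D'' (φ η) * g1 η * g1 η + D' (φ η) * g2 η) η :=
    ((hD'' (φ η)).comp η (hφ' η hηmem)).mul hg1'
  rw [hstep, hψ.deriv]
  -- now the bound
  have hy : φ η ∈ f '' Set.Icc (0:ℝ) 1 := ⟨η, hηIcc, hfφ η hηIcc⟩
  obtain ⟨hD''0, hD''B⟩ := hD''bound _ hy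
  obtain ⟨hD'B, hD'0⟩ := hD'bound _ hy
  have hbN : b ≤ N η := by
    have : 0 ≤ (K - 1) * a * η := by positivity
    simp only [hNdef]; nlinarith
  have hbd : b ≤ dd η := by
    have : 0 ≤ a * (1 - η) := by nlinarith
    simp only [hddef]; nlinarith
  -- bounds on g1
  have hg1nn : 0 ≤ g1 η := by
    have t1 : 0 ≤ (K - 1) * a / N η := by positivity
    have t2 : 0 ≤ a / dd η := by positivity
    simp only [hg1def]; linarith
  have hg1ub : g1 η ≤ K * a / b := by
    have t1 : (K - 1) * a / N η ≤ (K - 1) * a / b :=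
      div_le_div_of_nonneg_left (by positivity) hb hbN
    have t2 : a / dd η ≤ a / b := div_le_div_of_nonneg_left ha.le hb hbd
    have : (K - 1) * a / b + a / b = K * a / b := by field_simp; ring
    simp only [hg1def]; linarith
  -- bounds on g2
  have hg2lb : -(((K - 1) * a / b) ^ 2) ≤ g2 η := by
    have t1 : 0 ≤ a ^ 2 / (dd η) ^ 2 := by positivity
    have t2 : ((K - 1) * a) ^ 2 / (N η) ^ 2 ≤ ((K - 1) * a) ^ 2 / b ^ 2 := by
      apply div_le_div_of_nonneg_left (by positivity) (by positivity)
      exact pow_le_pow_left₀ hb.le hbN 2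
    have : ((K - 1) * a) ^ 2 / b ^ 2 = ((K - 1) * a / b) ^ 2 := by
      field_simp
    simp only [hg2def]; nlinarith
  -- term 1 bound
  have hterm1 : D'' (φ η) * g1 η * g1 η ≤ Bbar * (K * a / b) ^ 2 := by
    have hsq : g1 η * g1 η ≤ (K * a / b) * (K * a / b) :=
      mul_le_mul hg1ub hg1ub hg1nn (by positivity)
    have h := mul_le_mul hD''B hsq (mul_self_nonneg _) hBbar
    have e1 : Bbar * ((K * a / b) * (K * a / b)) = Bbar * (K * a / b) ^ 2 := by ring
    have e2 : D'' (φ η) * (g1 η * g1 η) = D'' (φ η) * g1 η * g1 η := by ring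
    linarith [e1 ▸ e2 ▸ h]
  -- term 2 bound
  have hterm2 : D' (φ η) * g2 η ≤ -Blow * ((K - 1) * a / b) ^ 2 := by
    rcases le_or_gt 0 (g2 η) with hg | hg
    · have t0 : D' (φ η) * g2 η ≤ 0 := mul_nonpos_of_nonpos_of_nonneg hD'0 hg
      have t1 : (0:ℝ) ≤ -Blow * ((K - 1) * a / b) ^ 2 :=
        mul_nonneg (by linarith) (by positivity)
      exact t0.trans t1
    · have t1 : D' (φ η) * g2 η ≤ Blow * g2 η :=
        mul_le_mul_of_nonpos_right hD'B hg.le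
      have t2 : Blow * g2 η = (-Blow) * (-(g2 η)) := by ring
      have t3 : -(g2 η) ≤ ((K - 1) * a / b) ^ 2 := by linarith
      have t4 : (-Blow) * (-(g2 η)) ≤ (-Blow) * ((K - 1) * a / b) ^ 2 :=
        mul_le_mul_of_nonneg_left t3 (by linarith)
      calc D' (φ η) * g2 η ≤ Blow * g2 η := t1
        _ = (-Blow) * (-(g2 η)) := t2
        _ ≤ (-Blow) * ((K - 1) * a / b) ^ 2 := t4
        _ = -Blow * ((K - 1) * a / b) ^ 2 := by ring
  have hfinal : Bbar * (K * a / b) ^ 2 + -Blow * ((K - 1) * a / b) ^ 2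
      = (Bbar * K ^ 2 - Blow * (K - 1) ^ 2) * (a / b) ^ 2 := by
    field_simp
    ring
  linarith
end

section
/- Let E be a finite index set, let ℱ ⊆ ℝ^E be convex, and let 𝒞 ⊆ ℝ^E be strictly convex in the sense that for any two distinct points x, y ∈ 𝒞 and any λ ∈ (0,1) there exists z ∈ 𝒞 with z_e > λx_e + (1−λ)y_e for every e ∈ E. For each e ∈ E let D_e : ℝ × ℝ → ℝ be jointly convex and strictly decreasing in its first argument. If (C⁰, F⁰) and (C¹, F¹) both minimize Σ_e D_e(C_e, F_e) over 𝒞 × ℱ, then C⁰ = C¹. If, in addition, each D_e(c, ·) is strictly convex in its second argument, then also F⁰ = F¹. -/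
open Finset

/-- Uniqueness of the jointly optimal capacity allocation (and, under strict convexity of
the cost in the flow, of the flow allocation) over a strictly convex capacity region. -/
theorem stmt_11 {ι : Type*} [Fintype ι]
    (𝒞 ℱ : Set (ι → ℝ)) (hℱ : Convex ℝ ℱ)
    (h𝒞strict : ∀ x ∈ 𝒞, ∀ y ∈ 𝒞, x ≠ y → ∀ l ∈ Set.Ioo (0 : ℝ) 1,
      ∃ z ∈ 𝒞, ∀ e, l * x e + (1 - l) * y e < z e)
    (D : ι → ℝ → ℝ → ℝ)
    (hDconv : ∀ e, ConvexOn ℝ Set.univ (fun p : ℝ × ℝ => D e p.1 p.2))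
    (hDdec : ∀ e (f : ℝ) (c c' : ℝ), c < c' → D e c' f < D e c f)
    (C0 F0 C1 F1 : ι → ℝ)
    (hC0 : C0 ∈ 𝒞) (hF0 : F0 ∈ ℱ) (hC1 : C1 ∈ 𝒞) (hF1 : F1 ∈ ℱ)
    (hmin0 : ∀ C ∈ 𝒞, ∀ F ∈ ℱ, ∑ e, D e (C0 e) (F0 e) ≤ ∑ e, D e (C e) (F e))
    (hmin1 : ∀ C ∈ 𝒞, ∀ F ∈ ℱ, ∑ e, D e (C1 e) (F1 e) ≤ ∑ e, D e (C e) (F e)) :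
    C0 = C1 ∧
      ((∀ e c, StrictConvexOn ℝ Set.univ (fun f => D e c f)) → F0 = F1) := by
  set V : ℝ := ∑ e, D e (C0 e) (F0 e) with hVdef
  have hV1 : ∑ e, D e (C1 e) (F1 e) = V :=
    le_antisymm (hmin1 C0 hC0 F0 hF0) (hmin0 C1 hC1 F1 hF1)
  -- midpoint flow
  set Fm : ι → ℝ := fun e => (1/2 : ℝ) * F0 e + (1/2 : ℝ) * F1 e with hFmdef
  have hFm : Fm ∈ ℱ := by
    have := hℱ hF0 hF1 (by norm_num : (0:ℝ) ≤ 1/2) (by norm_num : (0:ℝ) ≤ 1/2)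
      (by norm_num : (1/2 : ℝ) + 1/2 = 1)
    have heq : Fm = (1/2 : ℝ) • F0 + (1/2 : ℝ) • F1 := by
      funext e
      simp [hFmdef, Pi.add_apply, Pi.smul_apply, smul_eq_mul]
    rwa [heq]
  -- joint convexity at the midpoint
  have hmid : ∀ e, D e ((1/2 : ℝ) * C0 e + (1/2 : ℝ) * C1 e) (Fm e)
      ≤ (1/2 : ℝ) * D e (C0 e) (F0 e) + (1/2 : ℝ) * D e (C1 e) (F1 e) := by
    intro e
    have h := (hDconv e).2 (Set.mem_univ (C0 e, F0 e)) (Set.mem_univ (C1 e, F1 e))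
      (by norm_num : (0:ℝ) ≤ 1/2) (by norm_num : (0:ℝ) ≤ 1/2)
      (by norm_num : (1/2 : ℝ) + 1/2 = 1)
    simpa [Prod.smul_mk, smul_eq_mul, hFmdef] using h
  have hmidsum : ∑ e, D e ((1/2 : ℝ) * C0 e + (1/2 : ℝ) * C1 e) (Fm e) ≤ V := by
    calc ∑ e, D e ((1/2 : ℝ) * C0 e + (1/2 : ℝ) * C1 e) (Fm e)
        ≤ ∑ e, ((1/2 : ℝ) * D e (C0 e) (F0 e) + (1/2 : ℝ) * D e (C1 e) (F1 e)) :=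
          Finset.sum_le_sum fun e _ => hmid e
      _ = (1/2 : ℝ) * V + (1/2 : ℝ) * ∑ e, D e (C1 e) (F1 e) := by
          rw [Finset.sum_add_distrib, ← Finset.mul_sum, ← Finset.mul_sum]
      _ = V := by rw [hV1]; ring
  have hCC : C0 = C1 := by
    by_contra hne
    obtain ⟨z, hz𝒞, hz⟩ := h𝒞strict C0 hC0 C1 hC1 hne (1/2)
      (by constructor <;> norm_num)
    have hlt : ∑ e, D e (z e) (Fm e)
        < ∑ e, D e ((1/2 : ℝ) * C0 e + (1/2 : ℝ) * C1 e) (Fm e) := by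
      rcases isEmpty_or_nonempty ι with h | h
      · exact absurd (Subsingleton.elim C0 C1) hne
      · refine Finset.sum_lt_sum_of_nonempty Finset.univ_nonempty fun e _ => ?_
        have hze := hz e
        have : (1/2 : ℝ) * C0 e + (1 - 1/2 : ℝ) * C1 e
            = (1/2 : ℝ) * C0 e + (1/2 : ℝ) * C1 e := by norm_num
        exact hDdec e (Fm e) _ _ (by linarith [hz e])
    have := hmin0 z hz𝒞 Fm hFm
    linarith
  refine ⟨hCC, fun hstr => ?_⟩
  by_contra hFne
  have ⟨e0, he0⟩ : ∃ e, F0 e ≠ F1 e := by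
    by_contra h
    push_neg at h
    exact hFne (funext h)
  have hlt : ∑ e, D e (C0 e) (Fm e) < V := by
    have hle : ∀ e ∈ Finset.univ, D e (C0 e) (Fm e)
        ≤ (1/2 : ℝ) * D e (C0 e) (F0 e) + (1/2 : ℝ) * D e (C1 e) (F1 e) := by
      intro e _
      have := hmid e
      rwa [show (1/2 : ℝ) * C0 e + (1/2 : ℝ) * C1 e = C0 e by rw [← hCC]; ring] at this
    have hstrict0 : D e0 (C0 e0) (Fm e0)
        < (1/2 : ℝ) * D e0 (C0 e0) (F0 e0) + (1/2 : ℝ) * D e0 (C1 e0) (F1 e0) := by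
      have h := (hstr e0 (C0 e0)).2 (Set.mem_univ (F0 e0)) (Set.mem_univ (F1 e0)) he0
        (by norm_num : (0:ℝ) < 1/2) (by norm_num : (0:ℝ) < 1/2)
        (by norm_num : (1/2 : ℝ) + 1/2 = 1)
      simpa [smul_eq_mul, hFmdef, ← hCC] using h
    calc ∑ e, D e (C0 e) (Fm e)
        < ∑ e, ((1/2 : ℝ) * D e (C0 e) (F0 e) + (1/2 : ℝ) * D e (C1 e) (F1 e)) :=
          Finset.sum_lt_sum hle ⟨e0, Finset.mem_univ e0, hstrict0⟩
      _ = V := by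
          rw [Finset.sum_add_distrib, ← Finset.mul_sum, ← Finset.mul_sum, hV1]; ring
  have := hmin0 C0 hC0 Fm hFm
  linarith
end
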